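/- Assume S has no conjugate points. Then for every r ∈ ℤ^d, the function x ∈ ℝ^d ↦ S(x, x + r) is constant. -/

import Mathlib

noncomputable section

/-- Configuration space `ℝ^d` with the Euclidean norm. -/
abbrev Ed (d : ℕ) := EuclideanSpace ℝ (Fin d)

/-- The point of `ℝ^d` with integer coordinates given by `r ∈ ℤ^d`. -/
def intVec (d : ℕ) (r : Fin d → ℤ) : Ed d := WithLp.toLp 2 (fun i => (r i : ℝ))

/-- A generating function: a `C²` map `S : ℝ^d × ℝ^d → ℝ` which is `ℤ^d`-periodic for
the diagonal action and satisfies the uniform twist condition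
`∑_{i,j} ∂²S/∂xᵢ∂yⱼ (x,y) ξᵢ ξⱼ ≤ -A‖ξ‖²` (expressed via the second derivative of `S`
applied to `((ξ,0),(0,ξ))`). -/
def IsGenFn {d : ℕ} (S : Ed d × Ed d → ℝ) : Prop :=
  ContDiff ℝ 2 S ∧
  (∀ (r : Fin d → ℤ) (x y : Ed d), S (x + intVec d r, y + intVec d r) = S (x, y)) ∧
  ∃ A : ℝ, 0 < A ∧ ∀ (x y ξ : Ed d),
    iteratedFDeriv ℝ 2 S (x, y) ![(ξ, 0), (0, ξ)] ≤ -A * ‖ξ‖ ^ 2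

/-- `∂₁S`, the partial differential of `S` with respect to its first variable. -/
def D1 {d : ℕ} (S : Ed d × Ed d → ℝ) (x y : Ed d) : Ed d →L[ℝ] ℝ :=
  fderiv ℝ (fun z => S (z, y)) x

/-- `∂₂S`, the partial differential of `S` with respect to its second variable. -/
def D2 {d : ℕ} (S : Ed d × Ed d → ℝ) (x y : Ed d) : Ed d →L[ℝ] ℝ :=
  fderiv ℝ (fun z => S (x, z)) y

/-- A bi-infinite sequence `(x_n)_{n∈ℤ}` is extremal if
`∂₂S(x_{n-1}, x_n) + ∂₁S(x_n, x_{n+1}) = 0` for every `n`. -/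
def IsExtremal {d : ℕ} (S : Ed d × Ed d → ℝ) (u : ℤ → Ed d) : Prop :=
  ∀ n : ℤ, D2 S (u (n - 1)) (u n) + D1 S (u n) (u (n + 1)) = 0

/-- The action `S(x_0, …, x_n)` of a finite sequence. -/
def act {d : ℕ} (S : Ed d × Ed d → ℝ) (n : ℕ) (γ : ℕ → Ed d) : ℝ :=
  ∑ k ∈ Finset.range n, S (γ k, γ (k + 1))

/-- The sequence `(x, z_1, …, z_{N-1}, y)` built from interior points `z`. -/
def path {d : ℕ} (x y : Ed d) (N : ℕ) (z : Fin (N - 1) → Ed d) : ℕ → Ed d :=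
  fun k => if h0 : k = 0 then x else if h : k < N then z ⟨k - 1, by omega⟩ else y

/-- The fixed-endpoint action `S_{x,y,N} : (x_1, …, x_{N-1}) ↦ S(x, x_1, …, x_{N-1}, y)`. -/
def fixedAct {d : ℕ} (S : Ed d × Ed d → ℝ) (x y : Ed d) (N : ℕ) :
    (Fin (N - 1) → Ed d) → ℝ :=
  fun z => act S N (path x y N z)

/-- `S` has no conjugate points: for all `x, y` and `N ≥ 2`, the fixed-endpoint action
`S_{x,y,N}` has exactly one critical point, and attains its global minimum there. -/
def NoConjPts {d : ℕ} (S : Ed d × Ed d → ℝ) : Prop :=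
  ∀ (x y : Ed d) (N : ℕ), 2 ≤ N →
    ∃ z : Fin (N - 1) → Ed d,
      fderiv ℝ (fixedAct S x y N) z = 0 ∧
      (∀ w, fixedAct S x y N z ≤ fixedAct S x y N w) ∧
      (∀ z', fderiv ℝ (fixedAct S x y N) z' = 0 → z' = z)

/-- `A_N(x,y)`: the minimum of the fixed-endpoint action `S_{x,y,N}` for `N ≥ 2`,
and `S(x,y)` for `N = 1`. -/
def AN {d : ℕ} (S : Ed d × Ed d → ℝ) (N : ℕ) (x y : Ed d) : ℝ :=
  if N ≤ 1 then S (x, y) else sInf (Set.range (fixedAct S x y N))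

/-- The minimizing holonomic value `Σ̃(S)`. -/
def holVal {d : ℕ} (S : Ed d × Ed d → ℝ) : ℝ :=
  sInf { v : ℝ | ∃ n : ℕ, 1 ≤ n ∧ ∃ γ : ℕ → Ed d,
    (∃ r : Fin d → ℤ, γ n - γ 0 = intVec d r) ∧ v = act S n γ / n }

/-- The normalized action `S̃(x_0, …, x_n) = S(x_0, …, x_n) - n Σ̃(S)`. -/
def actTilde {d : ℕ} (S : Ed d × Ed d → ℝ) (n : ℕ) (γ : ℕ → Ed d) : ℝ :=
  act S n γ - n * holVal S

/-- The Mañé potential `π(x,y)`. -/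
def manePot {d : ℕ} (S : Ed d × Ed d → ℝ) (x y : Ed d) : ℝ :=
  sInf { v : ℝ | ∃ n : ℕ, 1 ≤ n ∧ ∃ γ : ℕ → Ed d,
    γ 0 = x ∧ (∃ r : Fin d → ℤ, γ n - y = intVec d r) ∧ v = actTilde S n γ }

/-- The Aubry set `Ā(S) ⊂ ℝ^d × ℝ^d`. -/
def aubry {d : ℕ} (S : Ed d × Ed d → ℝ) : Set (Ed d × Ed d) :=
  { p | ∀ ε > 0, ∃ n : ℕ, 1 ≤ n ∧ ∃ γ : ℕ → Ed d,
      (∃ r : Fin d → ℤ, γ n - γ 0 = intVec d r) ∧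
      ‖p.1 - γ 0‖ < ε ∧ ‖p.2 - γ 1‖ < ε ∧ actTilde S n γ < ε }

/-- The generating function `S_c(x,y) = S(x,y) + c(x - y)` associated to a cohomology
class `c ∈ (ℝ^d)*`. -/
def Sc {d : ℕ} (S : Ed d × Ed d → ℝ) (c : Ed d →L[ℝ] ℝ) : Ed d × Ed d → ℝ :=
  fun p => S p + c (p.1 - p.2)



/-! The function `g v = S(v, v + r)` is `ℤ^d`-periodic, so it attains its maximum at some `a`.
There `S` has a differential at `(a, a + r)` vanishing on the diagonal, and by periodicity the same
differential at every `(a + k r, a + (k+1) r)`; hence the orbit `a, a + r, …, a + N r` is a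
critical point of the fixed-endpoint action, so by the absence of conjugate points it is the
minimizer. Comparing its action `N g(a)` with that of `a, w + r, …, w + (N-1) r, a + N r`, which is
`(N - 2) g(w) + O(1)`, and letting `N → ∞` gives `g a ≤ g w`. -/

open Function

section Periodic

variable {d : ℕ}

lemma exists_norm_sub_intVec_le_sqrt (v : Ed d) : ∃ s : Fin d → ℤ, ‖v - intVec d s‖ ≤ √d := by
  refine ⟨fun i => ⌊v i⌋, ?_⟩
  have hcoord : ∀ i, ‖(v - intVec d fun i => ⌊v i⌋) i‖ ^ 2 ≤ 1 := fun i => by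
    simp only [intVec, PiLp.sub_apply, Int.self_sub_floor, Real.norm_eq_abs, sq_abs]
    nlinarith [Int.fract_nonneg (v i), Int.fract_lt_one (v i)]
  rw [EuclideanSpace.norm_eq]
  refine Real.sqrt_le_sqrt ?_
  simpa using Finset.sum_le_sum fun i (_ : i ∈ Finset.univ) => hcoord i

lemma Continuous.exists_forall_le_of_intVec_periodic {g : Ed d → ℝ} (hg : Continuous g)
    (hper : ∀ s, Periodic g (intVec d s)) : ∃ xM, ∀ v, g v ≤ g xM := by
  obtain ⟨xM, -, hmax⟩ := (isCompact_closedBall (0 : Ed d) √d).exists_isMaxOn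
    ⟨0, Metric.mem_closedBall_self (Real.sqrt_nonneg _)⟩ hg.continuousOn
  refine ⟨xM, fun v => ?_⟩
  obtain ⟨s, hs⟩ := exists_norm_sub_intVec_le_sqrt v
  rw [← sub_add_cancel v (intVec d s), hper s]
  exact hmax (by simpa using hs)

end Periodic

lemma Function.Periodic.fderiv {E F : Type*} [NormedAddCommGroup E] [NormedSpace ℝ E]
    [NormedAddCommGroup F] [NormedSpace ℝ F] {f : E → F} {c : E} (hf : Periodic f c) :
    Periodic (fderiv ℝ f) c := fun x => by
  rw [← fderiv_comp_add_right, funext hf]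

lemma Function.Periodic.apply_add_nsmul {E γ : Type*} [AddMonoid E] {f : E × E → γ} {c : E}
    (hc : Periodic f (c, c)) (n : ℕ) (a b : E) : f (a + n • c, b + n • c) = f (a, b) :=
  hc.nsmul n (a, b)

section Path

variable {d N k : ℕ} {x y : Ed d} {z : Fin (N - 1) → Ed d}

lemma path_zero : path x y N z 0 = x := rfl

lemma path_of_pos_of_lt (h0 : 0 < k) (hk : k < N) : path x y N z k = z ⟨k - 1, by omega⟩ := by
  simp [path, h0.ne', hk]

lemma path_of_le (h0 : 0 < k) (hk : N ≤ k) : path x y N z k = y := by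
  simp [path, h0.ne', hk.not_gt]

def pathVar (d N k : ℕ) : (Fin (N - 1) → Ed d) →L[ℝ] Ed d :=
  if h : 0 < k ∧ k < N then ContinuousLinearMap.proj (⟨k - 1, by omega⟩ : Fin (N - 1)) else 0

lemma pathVar_zero : pathVar d N 0 = 0 := dif_neg (by omega)

lemma pathVar_self : pathVar d N N = 0 := dif_neg (by omega)

lemma path_eq_path_zero_add_pathVar : path x y N z k = path x y N 0 k + pathVar d N k z := by
  unfold path pathVar
  split_ifs <;> first | omega | simp

lemma hasFDerivAt_path (x y : Ed d) (N k : ℕ) (z : Fin (N - 1) → Ed d) :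
    HasFDerivAt (fun z => path x y N z k) (pathVar d N k) z := by
  have h : (fun z => path x y N z k) = fun z => path x y N 0 k + pathVar d N k z :=
    funext fun _ => path_eq_path_zero_add_pathVar
  rw [h]
  exact (pathVar d N k).hasFDerivAt.const_add _

end Path

section FirstVariation

variable {d N : ℕ} {S : Ed d × Ed d → ℝ} {x y : Ed d} {z : Fin (N - 1) → Ed d}

lemma hasFDerivAt_fixedAct (hS : Differentiable ℝ S) :
    HasFDerivAt (fixedAct S x y N)
      (∑ k ∈ Finset.range N, (fderiv ℝ S (path x y N z k, path x y N z (k + 1))).comp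
        ((pathVar d N k).prod (pathVar d N (k + 1)))) z := by
  unfold fixedAct act
  exact HasFDerivAt.fun_sum fun k _ =>
    (hS _).hasFDerivAt.comp z ((hasFDerivAt_path x y N k z).prodMk (hasFDerivAt_path x y N _ z))

/-- If `S` has the same differential `L` along every step of the path, the first variation
telescopes to `L (V, V)`, where `V` is the sum of the variations of the points. -/
lemma fderiv_fixedAct_eq_zero (hS : Differentiable ℝ S) {L : Ed d × Ed d →L[ℝ] ℝ}
    (hL : ∀ ξ, L (ξ, ξ) = 0)
    (hz : ∀ k < N, fderiv ℝ S (path x y N z k, path x y N z (k + 1)) = L) :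
    fderiv ℝ (fixedAct S x y N) z = 0 := by
  rw [(hasFDerivAt_fixedAct hS).fderiv]
  ext1 v
  set V : ℕ → Ed d := fun k => pathVar d N k v
  have hshift : ∑ k ∈ Finset.range N, V (k + 1) = ∑ k ∈ Finset.range N, V k := by
    have h₁ := Finset.sum_range_succ' V N
    have h₂ := Finset.sum_range_succ V N
    simp only [V, pathVar_zero, pathVar_self, zero_apply, add_zero] at h₁ h₂
    rw [← h₁, h₂]
  calc (∑ k ∈ Finset.range N, (fderiv ℝ S (path x y N z k, path x y N z (k + 1))).comp
          ((pathVar d N k).prod (pathVar d N (k + 1)))) v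
      = ∑ k ∈ Finset.range N, L (V k, V (k + 1)) := by
        simp only [sum_apply]
        refine Finset.sum_congr rfl fun k hk => ?_
        rw [hz k (Finset.mem_range.mp hk)]
        rfl
    _ = L (∑ k ∈ Finset.range N, V k, ∑ k ∈ Finset.range N, V (k + 1)) := by
        rw [prod_mk_sum, map_sum]
    _ = L (∑ k ∈ Finset.range N, V k, ∑ k ∈ Finset.range N, V k) := by rw [hshift]
    _ = 0 := hL _

end FirstVariation

section Orbit

variable {d : ℕ} {S : Ed d × Ed d → ℝ} {ρ : Ed d}

lemma path_orbit (a : Ed d) {N k : ℕ} (hk : k ≤ N) :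
    path a (a + N • ρ) N (fun j => a + (j.val + 1) • ρ) k = a + k • ρ := by
  rcases Nat.eq_zero_or_pos k with rfl | h0
  · simp [path_zero]
  rcases hk.lt_or_eq with hk | rfl
  · rw [path_of_pos_of_lt h0 hk, Nat.sub_add_cancel h0]
  · exact path_of_le h0 le_rfl

lemma fixedAct_translate_orbit (hρ : Periodic S (ρ, ρ)) (x y c : Ed d) (M : ℕ) :
    fixedAct S x y (M + 2) (fun j => c + (j.val + 1) • ρ)
      = S (x, c + ρ) + M * S (c, c + ρ) + S (c + (M + 1) • ρ, y) := by
  unfold fixedAct act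
  rw [Finset.sum_range_succ, Finset.sum_range_succ', path_of_le (by omega) le_rfl,
    path_zero, path_of_pos_of_lt (by omega) (by omega),
    path_of_pos_of_lt (k := M + 1) (by omega) (by omega)]
  have hmid : ∀ k ∈ Finset.range M, S (path x y (M + 2) (fun j => c + (j.val + 1) • ρ) (k + 1),
      path x y (M + 2) (fun j => c + (j.val + 1) • ρ) (k + 1 + 1)) = S (c, c + ρ) := by
    intro k hk
    rw [Finset.mem_range] at hk
    rw [path_of_pos_of_lt (by omega) (by omega), path_of_pos_of_lt (by omega) (by omega)]
    simp only [Nat.add_sub_cancel]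
    rw [← hρ.apply_add_nsmul (k + 1) c (c + ρ), succ_nsmul ρ (k + 1)]
    abel_nf
  simp only [Finset.sum_congr rfl hmid, Finset.sum_const, Finset.card_range, nsmul_eq_mul]
  simp only [zero_add, tsub_self, one_smul, add_tsub_cancel_right]
  ring

end Orbit

lemma le_of_forall_natCast_mul_le_add {a b C : ℝ} (h : ∀ n : ℕ, n * a ≤ n * b + C) : a ≤ b := by
  by_contra! hlt
  obtain ⟨n, hn⟩ := exists_nat_gt (C / (a - b))
  rw [div_lt_iff₀ (sub_pos.mpr hlt)] at hn
  nlinarith [h n]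

section NoConjugatePoints

variable {d : ℕ} {S : Ed d × Ed d → ℝ} {ρ a : Ed d}

lemma NoConjPts.fixedAct_le_of_fderiv_eq_zero (h : NoConjPts S) {x y : Ed d} {N : ℕ}
    (hN : 2 ≤ N) {z : Fin (N - 1) → Ed d} (hz : fderiv ℝ (fixedAct S x y N) z = 0)
    (w : Fin (N - 1) → Ed d) : fixedAct S x y N z ≤ fixedAct S x y N w := by
  obtain ⟨z₀, -, hmin, huniq⟩ := h x y N hN
  exact huniq z hz ▸ hmin w

lemma fderiv_apply_diag_eq_zero_of_forall_le (hS : Differentiable ℝ S)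
    (hmax : ∀ v, S (v, v + ρ) ≤ S (a, a + ρ)) (ξ : Ed d) : fderiv ℝ S (a, a + ρ) (ξ, ξ) = 0 := by
  have hg : HasFDerivAt (fun v => S (v, v + ρ)) ((fderiv ℝ S (a, a + ρ)).comp
      ((ContinuousLinearMap.id ℝ _).prod (ContinuousLinearMap.id ℝ _))) a :=
    (hS _).hasFDerivAt.comp a ((hasFDerivAt_id a).prodMk ((hasFDerivAt_id a).add_const ρ))
  have hcrit := ((isMaxOn_univ_iff.mpr hmax).isLocalMax Filter.univ_mem).fderiv_eq_zero
  simpa using congr($(hg.fderiv.symm.trans hcrit) ξ)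

lemma NoConjPts.le_of_forall_le (hS : Differentiable ℝ S) (h : NoConjPts S)
    (hρ : Periodic S (ρ, ρ)) (hmax : ∀ v, S (v, v + ρ) ≤ S (a, a + ρ)) (w : Ed d) :
    S (a, a + ρ) ≤ S (w, w + ρ) := by
  refine le_of_forall_natCast_mul_le_add (C := S (a, w + ρ) + S (w, a + ρ) - 2 * S (a, a + ρ))
    fun M => ?_
  have hcrit : fderiv ℝ (fixedAct S a (a + (M + 2) • ρ) (M + 2))
      (fun j => a + (j.val + 1) • ρ) = 0 := by
    refine fderiv_fixedAct_eq_zero hS (fderiv_apply_diag_eq_zero_of_forall_le hS hmax)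
      fun k hk => ?_
    rw [path_orbit a hk.le, path_orbit a hk, succ_nsmul', ← add_assoc]
    exact hρ.fderiv.nsmul k (a, a + ρ)
  have hmin := h.fixedAct_le_of_fderiv_eq_zero (by omega) hcrit fun j => w + (j.val + 1) • ρ
  rw [fixedAct_translate_orbit hρ, fixedAct_translate_orbit hρ,
    show a + (M + 2) • ρ = a + ρ + (M + 1) • ρ by rw [succ_nsmul _ (M + 1)]; abel,
    hρ.apply_add_nsmul, hρ.apply_add_nsmul] at hmin
  linarith

end NoConjugatePoints

theorem stmt_11_general (d : ℕ) (S : Ed d × Ed d → ℝ) (hS : IsGenFn S)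
    (h : NoConjPts S) :
    ∀ (r : Fin d → ℤ) (x x' : Ed d),
      S (x, x + intVec d r) = S (x', x' + intVec d r) := by
  obtain ⟨hC2, hper, -⟩ := hS
  have hdiff : Differentiable ℝ S := hC2.differentiable (by norm_num)
  intro r x x'
  have hρ : Periodic S (intVec d r, intVec d r) := fun p => hper r p.1 p.2
  obtain ⟨a, ha⟩ := Continuous.exists_forall_le_of_intVec_periodic
    (hC2.continuous.comp (by fun_prop : Continuous fun v : Ed d => (v, v + intVec d r)))
    fun s v => by simpa [add_right_comm] using hper s v (v + intVec d r)
  have hmin := h.le_of_forall_le hdiff hρ ha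
  exact le_antisymm ((ha x).trans (hmin x')) ((ha x').trans (hmin x))

/-- If `S` has no conjugate points, then for every `r ∈ ℤ^d` the quantity `S(x, x + r)`
does not depend on `x`. -/
theorem stmt_11 (d : ℕ) (hd : 1 ≤ d) (S : Ed d × Ed d → ℝ) (hS : IsGenFn S)
    (h : NoConjPts S) :
    ∀ (r : Fin d → ℤ) (x x' : Ed d),
      S (x, x + intVec d r) = S (x', x' + intVec d r) :=
  stmt_11_general d S hS h

end
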